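/- Let x be a root of unity with x ≠ 1, let n ≥ 0 be an integer, and let s ∈ ℂ with |s+n+1/2| < 1/2. Then Φ(s;x) = x^n · ∑_{m=0}^∞ ( (−1)^m · ti_{m+1}(x) − x · ti_{m+1}(x^{−1}) ) · (s+n+1/2)^m. -/

import Mathlib

open Filter Finset

/-- Limit of a sequence of complex numbers (junk value if divergent). -/
noncomputable def seqLim (f : ℕ → ℂ) : ℂ := lim (Filter.map f Filter.atTop)

/-- Finite sum `t_n(p;z) = ∑_{k=1}^n z^k/(k-1/2)^p`. -/
noncomputable def tFin (p : ℕ) (z : ℂ) (n : ℕ) : ℂ :=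
  ∑ k ∈ Finset.Icc 1 n, z ^ k / ((k : ℂ) - 1/2) ^ p

/-- t-polylogarithm `ti_p(z) = ∑_{n=1}^∞ z^n/(n-1/2)^p`, as limit of partial sums. -/
noncomputable def tpoly (p : ℕ) (z : ℂ) : ℂ :=
  seqLim (fun N => ∑ n ∈ Finset.Icc 1 N, z ^ n / ((n : ℂ) - 1/2) ^ p)

/-- `φ(s;x) = ∑_{k=0}^∞ x^k/(k+s)`, as limit of partial sums. -/
noncomputable def phi (s x : ℂ) : ℂ :=
  seqLim (fun N => ∑ k ∈ Finset.range N, x ^ k / ((k : ℂ) + s))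


/-- `Φ(s;x) = φ(s;x) - φ(-s;x⁻¹) - 1/s`. -/
noncomputable def PhiFn (s x : ℂ) : ℂ := phi s x - phi (-s) x⁻¹ - 1 / s

/-!
Put `w = s + n + 1/2`. Shifting the summation index by `n + 1` writes `φ(s;x)` as
`x^n ∑_{k≥0} x^(k+1)/(k + 1/2 + w)` plus finitely many terms, and `φ(-s;x⁻¹)` as
`x^(n+1) ∑_{k≥0} x^-(k+1)/(k + 1/2 - w)` minus finitely many terms; the leftover terms add up to
`1/s`. Since `|w| < 1/2 ≤ k + 1/2`, expanding `1/(k + 1/2 + w)` geometrically in `w` gives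
`∑_m (-w)^m ti_{m+1}`. Only `ti_1` converges conditionally (Dirichlet's test); after splitting
off `1/(k + 1/2)`, the rest is an absolutely convergent double series that can be summed in
either order.
-/

open Topology

lemma seqLim_eq {f : ℕ → ℂ} {L : ℂ} (h : Tendsto f atTop (𝓝 L)) : seqLim f = L :=
  h.limUnder_eq

lemma sum_Icc_one_eq_sum_range {M : Type*} [AddCommMonoid M] (f : ℕ → M) (N : ℕ) :
    ∑ j ∈ Icc 1 N, f j = ∑ k ∈ range N, f (k + 1) := by
  rw [← Finset.Ico_add_one_right_eq_Icc, Finset.sum_Ico_eq_sum_range]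
  simp [Nat.add_comm]

lemma tpoly_eq_seqLim (p : ℕ) (z : ℂ) :
    tpoly p z = seqLim fun N => ∑ k ∈ range N, z ^ (k + 1) / ((k : ℂ) + 1 / 2) ^ p := by
  unfold tpoly
  congr 1
  funext N
  rw [sum_Icc_one_eq_sum_range]
  push_cast
  ring_nf

lemma norm_natCast_add_half (k : ℕ) : ‖(k : ℂ) + 1 / 2‖ = k + 1 / 2 := by
  rw [show (k : ℂ) + 1 / 2 = ((k + 1 / 2 : ℝ) : ℂ) by push_cast; rfl, Complex.norm_real,
    Real.norm_of_nonneg (by positivity)]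

lemma natCast_add_half_ne_zero (k : ℕ) : (k : ℂ) + 1 / 2 ≠ 0 := by
  rw [← norm_ne_zero_iff, norm_natCast_add_half]
  positivity

lemma natCast_add_half_add_ne_zero {w : ℂ} (hw : ‖w‖ < 1 / 2) (k : ℕ) :
    (k : ℂ) + 1 / 2 + w ≠ 0 := by
  intro h
  have := norm_natCast_add_half k
  rw [eq_neg_of_add_eq_zero_left h, norm_neg] at this
  have : (0 : ℝ) ≤ k := k.cast_nonneg
  linarith

lemma summable_inv_natCast_add_half_sq : Summable fun k : ℕ => (((k : ℝ) + 1 / 2) ^ 2)⁻¹ := by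
  have h := (Real.summable_one_div_nat_add_rpow (1 / 2) 2).mpr one_lt_two
  refine h.congr fun k => ?_
  rw [abs_of_nonneg (by positivity), Real.rpow_two, one_div]

lemma norm_sum_range_pow_succ_le {z : ℂ} (hz : ‖z‖ ≤ 1) (hz1 : z ≠ 1) (N : ℕ) :
    ‖∑ k ∈ range N, z ^ (k + 1)‖ ≤ 2 / ‖z - 1‖ := by
  simp_rw [pow_succ, ← Finset.sum_mul, geom_sum_eq hz1, div_mul_eq_mul_div, norm_div]
  gcongr
  calc ‖(z ^ N - 1) * z‖ ≤ (‖z‖ ^ N + 1) * ‖z‖ := by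
        rw [norm_mul]
        gcongr
        exact (norm_sub_le _ _).trans (by rw [norm_pow, norm_one])
    _ ≤ 2 := by nlinarith [pow_le_one₀ (norm_nonneg z) hz (n := N), norm_nonneg z]

lemma tendsto_tpoly_one {z : ℂ} (hz : ‖z‖ ≤ 1) (hz1 : z ≠ 1) :
    Tendsto (fun N => ∑ k ∈ range N, z ^ (k + 1) / ((k : ℂ) + 1 / 2)) atTop (𝓝 (tpoly 1 z)) := by
  have hcauchy := Antitone.cauchySeq_series_mul_of_tendsto_zero_of_bounded
    (f := fun k : ℕ => ((k : ℝ) + 1 / 2)⁻¹) (z := fun k => z ^ (k + 1))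
    (fun i j hij => inv_anti₀ (by positivity) (by gcongr))
    (tendsto_inv_atTop_zero.comp (tendsto_natCast_atTop_atTop.atTop_add tendsto_const_nhds))
    (norm_sum_range_pow_succ_le hz hz1)
  obtain ⟨L, hL⟩ := cauchySeq_tendsto_of_complete hcauchy
  have hL' : Tendsto (fun N => ∑ k ∈ range N, z ^ (k + 1) / ((k : ℂ) + 1 / 2)) atTop (𝓝 L) := by
    refine hL.congr fun N => Finset.sum_congr rfl fun k _ => ?_
    rw [Complex.real_smul]
    push_cast
    ring
  simpa only [tpoly_eq_seqLim, pow_one, seqLim_eq hL'] using hL'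

lemma norm_pow_div_natCast_add_half_pow_le {z : ℂ} (hz : ‖z‖ ≤ 1) (k m : ℕ) :
    ‖z ^ (k + 1) / ((k : ℂ) + 1 / 2) ^ (m + 2)‖ ≤ 2 ^ m * (((k : ℝ) + 1 / 2) ^ 2)⁻¹ := by
  have hb : (1 / 2 : ℝ) ≤ k + 1 / 2 := by linarith [k.cast_nonneg (α := ℝ)]
  rw [norm_div, norm_pow, norm_pow, norm_natCast_add_half, pow_add ((k : ℝ) + 1 / 2) m 2,
    show (2 : ℝ) ^ m * (((k : ℝ) + 1 / 2) ^ 2)⁻¹ = 1 / ((1 / 2) ^ m * ((k : ℝ) + 1 / 2) ^ 2) by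
      field_simp; rw [one_div_pow, mul_one_div_cancel (by positivity)]]
  gcongr
  exact pow_le_one₀ (norm_nonneg z) hz

lemma hasSum_tpoly_add_two {z : ℂ} (hz : ‖z‖ ≤ 1) (m : ℕ) :
    HasSum (fun k : ℕ => z ^ (k + 1) / ((k : ℂ) + 1 / 2) ^ (m + 2)) (tpoly (m + 2) z) := by
  have hs : Summable fun k : ℕ => z ^ (k + 1) / ((k : ℂ) + 1 / 2) ^ (m + 2) :=
    (summable_inv_natCast_add_half_sq.mul_left _).of_norm_bounded
      (norm_pow_div_natCast_add_half_pow_le hz · m)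
  rw [tpoly_eq_seqLim, seqLim_eq hs.hasSum.tendsto_sum_nat]
  exact hs.hasSum

lemma div_add_eq_div_sub_mul_div {K : Type*} [Field K] {a b w : K} (hb : b ≠ 0)
    (hbw : b + w ≠ 0) : a / (b + w) = a / b - w * (a / (b * (b + w))) := by
  field_simp
  ring

section Expansion

variable {z w : ℂ}

lemma summable_expansion (hz : ‖z‖ ≤ 1) (hw : ‖w‖ < 1 / 2) :
    Summable fun km : ℕ × ℕ =>
      (-w) ^ km.2 * (z ^ (km.1 + 1) / ((km.1 : ℂ) + 1 / 2) ^ (km.2 + 2)) := by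
  refine (summable_inv_natCast_add_half_sq.mul_of_nonneg
    (summable_geometric_of_lt_one (by positivity) (by linarith : 2 * ‖w‖ < 1))
    (fun _ => by positivity) (fun _ => by positivity)).of_norm_bounded fun ⟨k, m⟩ => ?_
  calc ‖(-w) ^ m * (z ^ (k + 1) / ((k : ℂ) + 1 / 2) ^ (m + 2))‖
      ≤ ‖w‖ ^ m * (2 ^ m * (((k : ℝ) + 1 / 2) ^ 2)⁻¹) := by
        rw [norm_mul, norm_pow, norm_neg]
        gcongr
        exact norm_pow_div_natCast_add_half_pow_le hz k m
    _ = (((k : ℝ) + 1 / 2) ^ 2)⁻¹ * (2 * ‖w‖) ^ m := by ring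

lemma hasSum_expansion_fiber (hw : ‖w‖ < 1 / 2) (k : ℕ) :
    HasSum (fun m => (-w) ^ m * (z ^ (k + 1) / ((k : ℂ) + 1 / 2) ^ (m + 2)))
      (z ^ (k + 1) / (((k : ℂ) + 1 / 2) * ((k : ℂ) + 1 / 2 + w))) := by
  set b : ℂ := (k : ℂ) + 1 / 2
  have hb : b ≠ 0 := natCast_add_half_ne_zero k
  have hbw : b + w ≠ 0 := natCast_add_half_add_ne_zero hw k
  have hratio : ‖-w / b‖ < 1 := by
    rw [norm_div, norm_neg, norm_natCast_add_half, div_lt_one (by positivity)]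
    linarith [k.cast_nonneg (α := ℝ)]
  have hgeom := (hasSum_geometric_of_norm_lt_one hratio).mul_left (z ^ (k + 1) / b ^ 2)
  rw [neg_div, sub_neg_eq_add, one_add_div hb, inv_div] at hgeom
  rw [show z ^ (k + 1) / (b * (b + w)) = z ^ (k + 1) / b ^ 2 * (b / (b + w)) by field_simp]
  refine hgeom.congr_fun fun m => ?_
  rw [← neg_div, div_pow]
  field_simp
  ring

lemma exists_hasSum_pow_mul_tpoly_and_tendsto (hz : ‖z‖ ≤ 1) (hz1 : z ≠ 1) (hw : ‖w‖ < 1 / 2) :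
    ∃ L, HasSum (fun m => (-w) ^ m * tpoly (m + 1) z) L ∧
      Tendsto (fun N => ∑ k ∈ range N, z ^ (k + 1) / ((k : ℂ) + 1 / 2 + w)) atTop (𝓝 L) := by
  have hF := (summable_expansion hz hw).hasSum
  have hG := hF.prod_fiberwise (hasSum_expansion_fiber hw)
  have hT := ((Equiv.prodComm ℕ ℕ).hasSum_iff.mpr hF).prod_fiberwise
    fun m => (hasSum_tpoly_add_two hz m).mul_left ((-w) ^ m)
  set S := ∑' km : ℕ × ℕ, (-w) ^ km.2 * (z ^ (km.1 + 1) / ((km.1 : ℂ) + 1 / 2) ^ (km.2 + 2))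
  refine ⟨tpoly 1 z - w * S, ?_, ?_⟩
  · rw [← hasSum_nat_add_iff' 1, Finset.sum_range_one, pow_zero, one_mul, sub_sub_cancel_left,
      ← neg_mul]
    refine (hT.mul_left (-w)).congr_fun fun m => ?_
    ring
  · refine ((tendsto_tpoly_one hz hz1).sub (hG.tendsto_sum_nat.const_mul w)).congr fun N => ?_
    rw [Finset.mul_sum, ← Finset.sum_sub_distrib]
    exact Finset.sum_congr rfl fun k _ => (div_add_eq_div_sub_mul_div
      (natCast_add_half_ne_zero k) (natCast_add_half_add_ne_zero hw k)).symm

end Expansion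

lemma phi_eq_of_tendsto {s x L : ℂ} (n : ℕ)
    (h : Tendsto (fun N => ∑ k ∈ range N, x ^ (k + 1) / ((k : ℂ) + 1 / 2 + (s + n + 1 / 2)))
      atTop (𝓝 L)) :
    phi s x = ∑ k ∈ range (n + 1), x ^ k / ((k : ℂ) + s) + x ^ n * L := by
  refine seqLim_eq ((tendsto_add_atTop_iff_nat (n + 1)).mp ?_)
  refine ((tendsto_const_nhds (x := ∑ k ∈ range (n + 1), x ^ k / ((k : ℂ) + s))).add
    (h.const_mul (x ^ n))).congr fun N => ?_
  rw [add_comm N, Finset.sum_range_add _ (n + 1) N, Finset.mul_sum]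
  congr 1
  refine Finset.sum_congr rfl fun k _ => ?_
  rw [show ((n + 1 + k : ℕ) : ℂ) + s = (k : ℂ) + 1 / 2 + (s + n + 1 / 2) by push_cast; ring]
  ring

lemma phi_neg_inv_eq_of_tendsto {s x L : ℂ} (hx : x ≠ 0) (n : ℕ)
    (h : Tendsto (fun N => ∑ k ∈ range N, x⁻¹ ^ (k + 1) / ((k : ℂ) + 1 / 2 + -(s + n + 1 / 2)))
      atTop (𝓝 L)) :
    phi (-s) x⁻¹ = x ^ (n + 1) *
      (L - ∑ k ∈ range n, x⁻¹ ^ (k + 1) / ((k : ℂ) + 1 / 2 + -(s + n + 1 / 2))) := by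
  refine seqLim_eq ((((h.comp (tendsto_add_atTop_nat n)).sub_const _).const_mul _).congr
    fun N => ?_)
  rw [Function.comp_apply, add_comm N, Finset.sum_range_add _ n N, add_sub_cancel_left,
    Finset.mul_sum]
  refine Finset.sum_congr rfl fun k _ => ?_
  rw [show ((n + k : ℕ) : ℂ) + 1 / 2 + -(s + n + 1 / 2) = (k : ℂ) + -s by push_cast; ring,
    show n + k + 1 = (n + 1) + k by ring, pow_add x⁻¹ (n + 1) k, inv_pow x (n + 1)]
  field_simp

/-- The terms left over by the index shifts in `φ(-s;x⁻¹)`, reflected through `k ↦ n - 1 - k`,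
cancel the terms `1 ≤ k ≤ n` of `φ(s;x)`. -/
lemma sum_add_pow_mul_sum_inv_eq {s x : ℂ} (hx : x ≠ 0) (n : ℕ) :
    ∑ k ∈ range (n + 1), x ^ k / ((k : ℂ) + s) +
      x ^ (n + 1) * ∑ k ∈ range n, x⁻¹ ^ (k + 1) / ((k : ℂ) + 1 / 2 + -(s + n + 1 / 2)) =
    1 / s := by
  rw [Finset.sum_range_succ', ← Finset.sum_range_reflect
    (fun k => x⁻¹ ^ (k + 1) / ((k : ℂ) + 1 / 2 + -(s + n + 1 / 2))), Finset.mul_sum,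
    add_right_comm, ← Finset.sum_add_distrib, Finset.sum_eq_zero fun k hk => ?_]
  · simp
  have hk : k < n := Finset.mem_range.mp hk
  rw [show n - 1 - k + 1 = n - k by omega,
    show ((n - 1 - k : ℕ) : ℂ) + 1 / 2 + -(s + n + 1 / 2) = -(((k + 1 : ℕ) : ℂ) + s) by
      rw [Nat.cast_sub (by omega), Nat.cast_sub (by omega)]; push_cast; ring,
    show x ^ (n + 1) = x ^ (n - k) * x ^ (k + 1) by rw [← pow_add]; congr 1; omega,
    inv_pow]
  field_simp
  ring

theorem stmt2 (x : ℂ) (hx : ∃ m : ℕ, 0 < m ∧ x ^ m = 1) (hx1 : x ≠ 1)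
    (n : ℕ) (s : ℂ) (hs : ‖s + n + 1/2‖ < 1/2) :
    PhiFn s x = x ^ n * seqLim (fun N => ∑ m ∈ Finset.range N,
      ((-1 : ℂ) ^ m * tpoly (m + 1) x - x * tpoly (m + 1) x⁻¹) * (s + n + 1/2) ^ m) := by
  obtain ⟨m, hm, hxm⟩ := hx
  have hx_norm : ‖x‖ = 1 := Complex.norm_eq_one_of_pow_eq_one hxm hm.ne'
  have hx0 : x ≠ 0 := norm_ne_zero_iff.mp (by simp [hx_norm])
  obtain ⟨L₁, hsum₁, hL₁⟩ := exists_hasSum_pow_mul_tpoly_and_tendsto hx_norm.le hx1 hs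
  obtain ⟨L₂, hsum₂, hL₂⟩ := exists_hasSum_pow_mul_tpoly_and_tendsto (z := x⁻¹)
    (w := -(s + n + 1 / 2)) (by simp [hx_norm]) (inv_ne_one.mpr hx1) (by rwa [norm_neg])
  have hsum : HasSum (fun m => ((-1 : ℂ) ^ m * tpoly (m + 1) x - x * tpoly (m + 1) x⁻¹) *
      (s + n + 1 / 2) ^ m) (L₁ - x * L₂) :=
    (hsum₁.sub (hsum₂.mul_left x)).congr_fun fun m => by
      rw [neg_neg, neg_pow (s + n + 1 / 2)]
      ring
  rw [seqLim_eq hsum.tendsto_sum_nat, PhiFn, phi_eq_of_tendsto n hL₁,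
    phi_neg_inv_eq_of_tendsto hx0 n hL₂, ← sum_add_pow_mul_sum_inv_eq (s := s) hx0 n]
  ring
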